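/- Let d, k, N be positive natural numbers, σ > 0, and λ > 1. Let G = (g⁽¹⁾, …, g⁽ᴺ⁾) and G' = (g'⁽¹⁾, …, g'⁽ᴺ⁾) be two N-tuples of vectors in ℝ^d, each vector having all coordinates in {-1, 0, 1} and at most k nonzero coordinates, differing in at most one component. Let P and Q be the Gaussian measures on ℝ^d with means Σⱼ g⁽ʲ⁾ and Σⱼ g'⁽ʲ⁾ respectively, each with covariance σ²·I. Then D_λ(P ‖ Q) ≤ 2kλ/σ², and consequently for every δ ∈ (0, 1) and every measurable set S ⊆ ℝ^d, P(S) ≤ exp(2kλ/σ² + log(1/δ)/(λ − 1)) · Q(S) + δ. -/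

import Mathlib

open MeasureTheory
open Real
open scoped ENNReal NNReal

/-- The Rényi divergence of order `l` between measures `P` and `Q`
(for `P ≪ Q`): `D_l(P ‖ Q) = (1/(l-1)) · log ∫ (dP/dQ)^l dQ`. -/
noncomputable def renyiDiv {Ω : Type*} [MeasurableSpace Ω] (l : ℝ)
    (P Q : Measure Ω) : ℝ :=
  (l - 1)⁻¹ * Real.log (∫ x, (P.rnDeriv Q x).toReal ^ l ∂Q)

/-- The Gaussian measure on `ℝ^d` with mean `μ` and covariance `σ² · I`, given by its
density `(2πσ²)^(-d/2) · exp(-‖x - μ‖²/(2σ²))` with respect to Lebesgue measure. -/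
noncomputable def gaussianEuclidean (d : ℕ) (μ : EuclideanSpace ℝ (Fin d)) (σ : ℝ) :
    Measure (EuclideanSpace ℝ (Fin d)) :=
  volume.withDensity fun x =>
    ENNReal.ofReal ((2 * Real.pi * σ ^ 2) ^ (-(d : ℝ) / 2) *
      Real.exp (-‖x - μ‖ ^ 2 / (2 * σ ^ 2)))


variable {d : ℕ}

noncomputable def gφ (d : ℕ) (σ : ℝ) (μ x : EuclideanSpace ℝ (Fin d)) : ℝ :=
  (2 * Real.pi * σ ^ 2) ^ (-(d : ℝ) / 2) * Real.exp (-‖x - μ‖ ^ 2 / (2 * σ ^ 2))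

lemma gφ_pos {σ : ℝ} (hσ : 0 < σ) (μ x : EuclideanSpace ℝ (Fin d)) : 0 < gφ d σ μ x := by
  have : (0:ℝ) < 2 * Real.pi * σ ^ 2 := by positivity
  unfold gφ; positivity

lemma gφ_cont (σ : ℝ) (μ : EuclideanSpace ℝ (Fin d)) : Continuous (gφ d σ μ) := by
  unfold gφ
  fun_prop

lemma integrable_gauss_base {σ : ℝ} (hσ : 0 < σ) (μ : EuclideanSpace ℝ (Fin d)) :
    Integrable (fun x : EuclideanSpace ℝ (Fin d) => Real.exp (-‖x - μ‖ ^ 2 / (2 * σ ^ 2))) := by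
  have hb : (0:ℝ) < (2 * σ ^ 2)⁻¹ := by positivity
  have h0 : Integrable (fun x : EuclideanSpace ℝ (Fin d) =>
      Real.exp (-(2 * σ ^ 2)⁻¹ * ‖x‖ ^ 2)) := by
    have := (GaussianFourier.integrable_cexp_neg_mul_sq_norm_add
      (V := EuclideanSpace ℝ (Fin d)) (b := (((2 * σ ^ 2)⁻¹ : ℝ) : ℂ)) (by rw [Complex.ofReal_re]; exact hb) 0 0).norm
    refine this.congr (Filter.Eventually.of_forall fun x => ?_)
    show ‖Complex.exp _‖ = _
    rw [show (-(((2 * σ ^ 2)⁻¹ : ℝ) : ℂ) * (‖x‖ : ℂ) ^ 2 +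
        0 * ((inner ℝ (0 : EuclideanSpace ℝ (Fin d)) x : ℝ) : ℂ)) =
        ((-((2 * σ ^ 2)⁻¹ * ‖x‖ ^ 2) : ℝ) : ℂ) by push_cast; ring]
    rw [Complex.norm_exp, Complex.ofReal_re]; simp [neg_mul]
  have := h0.comp_sub_right μ
  refine this.congr ?_
  filter_upwards with x
  rw [neg_mul, neg_div, div_eq_inv_mul, mul_comm]

noncomputable def gaussianEuclidean' (d : ℕ) (μ : EuclideanSpace ℝ (Fin d)) (σ : ℝ) :
    Measure (EuclideanSpace ℝ (Fin d)) :=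
  volume.withDensity fun x => ENNReal.ofReal (gφ d σ μ x)

lemma integrable_gφ {σ : ℝ} (hσ : 0 < σ) (μ : EuclideanSpace ℝ (Fin d)) :
    Integrable (gφ d σ μ) :=
  (integrable_gauss_base hσ μ).const_mul _

lemma integral_gφ {σ : ℝ} (hσ : 0 < σ) (μ : EuclideanSpace ℝ (Fin d)) :
    ∫ x, gφ d σ μ x = 1 := by
  have hb : (0:ℝ) < (2 * σ ^ 2)⁻¹ := by positivity
  have h2 : (0:ℝ) < 2 * Real.pi * σ ^ 2 := by positivity
  unfold gφ
  rw [integral_const_mul]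
  have ht : ∫ x : EuclideanSpace ℝ (Fin d), Real.exp (-‖x - μ‖ ^ 2 / (2 * σ ^ 2))
      = ∫ x : EuclideanSpace ℝ (Fin d), Real.exp (-‖x‖ ^ 2 / (2 * σ ^ 2)) :=
    integral_sub_right_eq_self (fun x => Real.exp (-‖x‖ ^ 2 / (2 * σ ^ 2))) μ
  rw [ht]
  have : ∀ x : EuclideanSpace ℝ (Fin d), -‖x‖ ^ 2 / (2 * σ ^ 2) = -(2 * σ ^ 2)⁻¹ * ‖x‖ ^ 2 := by
    intro x; field_simp
  simp_rw [this, GaussianFourier.integral_rexp_neg_mul_sq_norm hb, finrank_euclideanSpace_fin]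
  rw [show Real.pi / (2 * σ ^ 2)⁻¹ = 2 * Real.pi * σ ^ 2 by field_simp]
  rw [show -(d:ℝ)/2 = -((d:ℝ)/2) by ring, Real.rpow_neg h2.le]
  exact inv_mul_cancel₀ (by positivity)

lemma isProb_gauss {σ : ℝ} (hσ : 0 < σ) (μ : EuclideanSpace ℝ (Fin d)) :
    IsProbabilityMeasure (gaussianEuclidean' d μ σ) := by
  constructor
  rw [gaussianEuclidean', withDensity_apply _ MeasurableSet.univ, setLIntegral_univ,
    ← MeasureTheory.ofReal_integral_eq_lintegral_ofReal (integrable_gφ hσ μ)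
      (Filter.Eventually.of_forall fun x => (gφ_pos hσ μ x).le),
    integral_gφ hσ μ, ENNReal.ofReal_one]

lemma key_iden {F : Type*} [NormedAddCommGroup F] [InnerProductSpace ℝ F]
    (x μ ν : F) (l : ℝ) :
    l * (‖x - ν‖ ^ 2 - ‖x - μ‖ ^ 2) - ‖x - ν‖ ^ 2 =
      l * (l - 1) * ‖μ - ν‖ ^ 2 - ‖x - (ν + l • (μ - ν))‖ ^ 2 := by
  have e1 : x - μ = (x - ν) - (μ - ν) := by abel
  have e2 : x - (ν + l • (μ - ν)) = (x - ν) - l • (μ - ν) := by abel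
  rw [e1, e2, norm_sub_sq_real (x - ν) (μ - ν), norm_sub_sq_real (x - ν) (l • (μ - ν)),
    real_inner_smul_right, norm_smul, Real.norm_eq_abs, mul_pow, sq_abs]
  ring

lemma ratio_pow_mul {σ : ℝ} (hσ : 0 < σ) (l : ℝ) (μ ν x : EuclideanSpace ℝ (Fin d)) :
    (gφ d σ μ x / gφ d σ ν x) ^ l * gφ d σ ν x =
      Real.exp (l * (l - 1) * ‖μ - ν‖ ^ 2 / (2 * σ ^ 2)) *
        gφ d σ (ν + l • (μ - ν)) x := by
  have h2 : (0:ℝ) < 2 * σ ^ 2 := by positivity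
  have hC : (0:ℝ) < (2 * Real.pi * σ ^ 2) ^ (-(d : ℝ) / 2) := by
    have : (0:ℝ) < 2 * Real.pi * σ ^ 2 := by positivity
    positivity
  have hr : gφ d σ μ x / gφ d σ ν x =
      Real.exp ((‖x - ν‖ ^ 2 - ‖x - μ‖ ^ 2) / (2 * σ ^ 2)) := by
    unfold gφ
    rw [mul_div_mul_left _ _ hC.ne', ← Real.exp_sub]
    congr 1
    field_simp
    ring
  rw [hr, ← Real.exp_mul]
  unfold gφ
  rw [mul_comm ((2 * Real.pi * σ ^ 2) ^ (-(d : ℝ) / 2)), ← mul_assoc, ← Real.exp_add,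
    mul_comm ((2 * Real.pi * σ ^ 2) ^ (-(d : ℝ) / 2)), ← mul_assoc, ← Real.exp_add]
  congr 2
  have := key_iden x μ ν l
  field_simp
  linarith [this]

lemma gφ_meas (σ : ℝ) (μ : EuclideanSpace ℝ (Fin d)) : Measurable (gφ d σ μ) :=
  (gφ_cont σ μ).measurable

lemma withDensity_ratio {σ : ℝ} (hσ : 0 < σ) (μ ν : EuclideanSpace ℝ (Fin d)) :
    gaussianEuclidean' d μ σ = (gaussianEuclidean' d ν σ).withDensity
      (fun x => ENNReal.ofReal (gφ d σ μ x / gφ d σ ν x)) := by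
  rw [gaussianEuclidean', gaussianEuclidean', ← withDensity_mul]
  · congr 1
    funext x
    rw [Pi.mul_apply, ← ENNReal.ofReal_mul (gφ_pos hσ ν x).le, mul_comm,
      div_mul_cancel₀ _ (gφ_pos hσ ν x).ne']
  · exact (gφ_meas σ ν).ennreal_ofReal
  · exact ((gφ_meas σ μ).div (gφ_meas σ ν)).ennreal_ofReal

lemma integral_ratio_pow {σ : ℝ} (hσ : 0 < σ) (l : ℝ) (μ ν : EuclideanSpace ℝ (Fin d)) :
    ∫ x, (gφ d σ μ x / gφ d σ ν x) ^ l ∂(gaussianEuclidean' d ν σ) =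
      Real.exp (l * (l - 1) * ‖μ - ν‖ ^ 2 / (2 * σ ^ 2)) := by
  have hmeq : gaussianEuclidean' d ν σ =
      volume.withDensity (fun x => ((gφ d σ ν x).toNNReal : ℝ≥0∞)) := rfl
  rw [hmeq, integral_withDensity_eq_integral_smul
    ((gφ_meas σ ν).real_toNNReal)]
  have : ∀ x, (gφ d σ ν x).toNNReal • (gφ d σ μ x / gφ d σ ν x) ^ l =
      Real.exp (l * (l - 1) * ‖μ - ν‖ ^ 2 / (2 * σ ^ 2)) *
        gφ d σ (ν + l • (μ - ν)) x := by
    intro x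
    rw [NNReal.smul_def, Real.coe_toNNReal _ (gφ_pos hσ ν x).le, smul_eq_mul]
    linear_combination ratio_pow_mul hσ l μ ν x
  simp_rw [this]
  rw [integral_const_mul, integral_gφ hσ, mul_one]

lemma integrable_ratio_pow {σ : ℝ} (hσ : 0 < σ) (l : ℝ) (μ ν : EuclideanSpace ℝ (Fin d)) :
    Integrable (fun x => (gφ d σ μ x / gφ d σ ν x) ^ l) (gaussianEuclidean' d ν σ) := by
  have hmeq : gaussianEuclidean' d ν σ =
      volume.withDensity (fun x => ((gφ d σ ν x).toNNReal : ℝ≥0∞)) := rfl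
  rw [hmeq, integrable_withDensity_iff_integrable_smul
    ((gφ_meas σ ν).real_toNNReal)]
  have : ∀ x, (gφ d σ ν x).toNNReal • (gφ d σ μ x / gφ d σ ν x) ^ l =
      Real.exp (l * (l - 1) * ‖μ - ν‖ ^ 2 / (2 * σ ^ 2)) *
        gφ d σ (ν + l • (μ - ν)) x := by
    intro x
    rw [NNReal.smul_def, Real.coe_toNNReal _ (gφ_pos hσ ν x).le, smul_eq_mul]
    linear_combination ratio_pow_mul hσ l μ ν x
  simp_rw [this]
  exact (integrable_gφ hσ _).const_mul _

lemma renyi_eq {σ : ℝ} (hσ : 0 < σ) {l : ℝ} (hl : 1 < l) (μ ν : EuclideanSpace ℝ (Fin d)) :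
    renyiDiv l (gaussianEuclidean' d μ σ) (gaussianEuclidean' d ν σ) =
      l * ‖μ - ν‖ ^ 2 / (2 * σ ^ 2) := by
  haveI := isProb_gauss hσ ν
  have hrd := Measure.rnDeriv_withDensity (gaussianEuclidean' d ν σ)
    (((gφ_meas σ μ).div (gφ_meas σ ν)).ennreal_ofReal
      (f := fun x => gφ d σ μ x / gφ d σ ν x))
  have h2 : (gaussianEuclidean' d μ σ).rnDeriv (gaussianEuclidean' d ν σ)
      =ᵐ[gaussianEuclidean' d ν σ]
      fun x => ENNReal.ofReal (gφ d σ μ x / gφ d σ ν x) := by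
    rw [withDensity_ratio hσ μ ν]; exact hrd
  have hint : ∫ x, ((gaussianEuclidean' d μ σ).rnDeriv (gaussianEuclidean' d ν σ) x).toReal ^ l
      ∂(gaussianEuclidean' d ν σ) =
      Real.exp (l * (l - 1) * ‖μ - ν‖ ^ 2 / (2 * σ ^ 2)) := by
    rw [← integral_ratio_pow hσ l μ ν]
    apply integral_congr_ae
    filter_upwards [h2] with x hx
    rw [hx, ENNReal.toReal_ofReal (div_nonneg (gφ_pos hσ μ x).le (gφ_pos hσ ν x).le)]
  rw [renyiDiv, hint, Real.log_exp]
  have h1 : l - 1 ≠ 0 := by linarith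
  field_simp

lemma lint_ratio_pow {σ : ℝ} (hσ : 0 < σ) (l : ℝ) (μ ν : EuclideanSpace ℝ (Fin d)) :
    ∫⁻ x, ENNReal.ofReal ((gφ d σ μ x / gφ d σ ν x) ^ l) ∂(gaussianEuclidean' d ν σ) =
      ENNReal.ofReal (Real.exp (l * (l - 1) * ‖μ - ν‖ ^ 2 / (2 * σ ^ 2))) := by
  rw [← MeasureTheory.ofReal_integral_eq_lintegral_ofReal (integrable_ratio_pow hσ l μ ν)
    (Filter.Eventually.of_forall fun x =>
      Real.rpow_nonneg (div_nonneg (gφ_pos hσ μ x).le (gφ_pos hσ ν x).le) l),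
    integral_ratio_pow hσ l μ ν]

lemma dp_conv {Ω : Type*} [MeasurableSpace Ω] (Q : Measure Ω) [IsProbabilityMeasure Q]
    (r : Ω → ℝ) (hr : Measurable r) (hrpos : ∀ x, 0 ≤ r x)
    {l ε : ℝ} (hl : 1 < l)
    (hmom : ∫⁻ x, ENNReal.ofReal (r x ^ l) ∂Q ≤ ENNReal.ofReal (Real.exp ((l - 1) * ε)))
    {δ : ℝ} (hδ0 : 0 < δ) (S : Set Ω) (hS : MeasurableSet S) :
    ((Q.withDensity fun x => ENNReal.ofReal (r x)) S).toReal ≤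
      Real.exp (ε + Real.log (1 / δ) / (l - 1)) * (Q S).toReal + δ := by
  set c : ℝ := Real.exp (ε + Real.log (1 / δ) / (l - 1)) with hc
  have hc0 : 0 < c := Real.exp_pos _
  have hl1 : (0:ℝ) < l - 1 := by linarith
  set T : Set Ω := {x | c < r x} with hT
  have hTm : MeasurableSet T := measurableSet_lt measurable_const hr
  -- pointwise bound on T
  have hpt : ∀ x ∈ T, r x ≤ c ^ (1 - l) * r x ^ l := by
    intro x hx
    have hrx : c < r x := hx
    have hrx0 : 0 < r x := lt_trans hc0 hrx
    have h1 : r x ^ l = r x * r x ^ (l - 1) := by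
      rw [← Real.rpow_one_add' (by positivity) (by intro h; linarith)]
      ring_nf
    have h2 : c ^ (1 - l) = (c ^ (l - 1))⁻¹ := by
      rw [show (1 - l : ℝ) = -(l - 1) by ring, Real.rpow_neg hc0.le]
    have h3 : c ^ (l - 1) ≤ r x ^ (l - 1) :=
      Real.rpow_le_rpow hc0.le hrx.le hl1.le
    have hcl : 0 < c ^ (l - 1) := Real.rpow_pos_of_pos hc0 _
    rw [h1, h2]
    calc r x = r x * 1 := (mul_one _).symm
      _ ≤ r x * ((c ^ (l - 1))⁻¹ * r x ^ (l - 1)) := by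
          apply mul_le_mul_of_nonneg_left _ hrx0.le
          rw [← div_eq_inv_mul, le_div_iff₀ hcl, one_mul]
          exact h3
      _ = (c ^ (l - 1))⁻¹ * (r x * r x ^ (l - 1)) := by ring
  -- decompose
  have key : (Q.withDensity fun x => ENNReal.ofReal (r x)) S ≤
      ENNReal.ofReal c * Q S + ENNReal.ofReal δ := by
    rw [withDensity_apply _ hS]
    have hsub : S ⊆ (S \ T) ∪ T := by
      intro x hx
      by_cases h : x ∈ T
      · exact Or.inr h
      · exact Or.inl ⟨hx, h⟩
    calc ∫⁻ x in S, ENNReal.ofReal (r x) ∂Q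
        ≤ ∫⁻ x in (S \ T) ∪ T, ENNReal.ofReal (r x) ∂Q := lintegral_mono_set hsub
      _ ≤ (∫⁻ x in S \ T, ENNReal.ofReal (r x) ∂Q) +
          ∫⁻ x in T, ENNReal.ofReal (r x) ∂Q := lintegral_union_le _ _ _
      _ ≤ ENNReal.ofReal c * Q S + ENNReal.ofReal δ := by
        gcongr
        · calc ∫⁻ x in S \ T, ENNReal.ofReal (r x) ∂Q
              ≤ ∫⁻ _x in S \ T, ENNReal.ofReal c ∂Q := by
                apply setLIntegral_mono measurable_const
                intro x hx
                exact ENNReal.ofReal_le_ofReal (not_lt.mp hx.2)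
            _ = ENNReal.ofReal c * Q (S \ T) := by
                rw [setLIntegral_const]
            _ ≤ ENNReal.ofReal c * Q S := by
                gcongr
                exact Set.diff_subset
        · calc ∫⁻ x in T, ENNReal.ofReal (r x) ∂Q
              ≤ ∫⁻ x in T, ENNReal.ofReal (c ^ (1 - l) * r x ^ l) ∂Q := by
                apply setLIntegral_mono (by fun_prop)
                intro x hx
                exact ENNReal.ofReal_le_ofReal (hpt x hx)
            _ ≤ ∫⁻ x, ENNReal.ofReal (c ^ (1 - l) * r x ^ l) ∂Q :=
                setLIntegral_le_lintegral _ _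
            _ = ENNReal.ofReal (c ^ (1 - l)) * ∫⁻ x, ENNReal.ofReal (r x ^ l) ∂Q := by
                simp_rw [ENNReal.ofReal_mul (Real.rpow_nonneg hc0.le _)]
                rw [lintegral_const_mul _ (by fun_prop)]
            _ ≤ ENNReal.ofReal (c ^ (1 - l)) * ENNReal.ofReal (Real.exp ((l - 1) * ε)) := by
                gcongr
            _ = ENNReal.ofReal δ := by
                rw [← ENNReal.ofReal_mul (Real.rpow_nonneg hc0.le _)]
                congr 1
                rw [hc, ← Real.exp_mul, ← Real.exp_add]
                rw [show (ε + Real.log (1 / δ) / (l - 1)) * (1 - l) + (l - 1) * ε =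
                  -Real.log (1 / δ) by field_simp; ring]
                rw [one_div, Real.log_inv, neg_neg, Real.exp_log hδ0]
  -- pass to toReal
  have hfin : ENNReal.ofReal c * Q S + ENNReal.ofReal δ ≠ ⊤ := by
    apply ENNReal.add_ne_top.mpr
    constructor
    · exact ENNReal.mul_ne_top ENNReal.ofReal_ne_top (measure_ne_top Q S)
    · exact ENNReal.ofReal_ne_top
  have := ENNReal.toReal_mono hfin key
  rw [ENNReal.toReal_add (ENNReal.mul_ne_top ENNReal.ofReal_ne_top (measure_ne_top Q S))
    ENNReal.ofReal_ne_top, ENNReal.toReal_mul, ENNReal.toReal_ofReal hc0.le,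
    ENNReal.toReal_ofReal hδ0.le] at this
  exact this

lemma norm_le_sqrt_k {k : ℕ} (x : EuclideanSpace ℝ (Fin d))
    (hsign : ∀ t, x t = -1 ∨ x t = 0 ∨ x t = 1)
    (hcard : (Finset.univ.filter fun t => x t ≠ 0).card ≤ k) :
    ‖x‖ ≤ Real.sqrt k := by
  rw [EuclideanSpace.norm_eq]
  apply Real.sqrt_le_sqrt
  have h1 : ∑ t, ‖x t‖ ^ 2 = ∑ t ∈ Finset.univ.filter fun t => x t ≠ 0, ‖x t‖ ^ 2 := by
    symm
    apply Finset.sum_filter_of_ne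
    intro t _ h
    intro h0
    rw [h0] at h
    simp at h
  rw [h1]
  calc ∑ t ∈ Finset.univ.filter fun t => x t ≠ 0, ‖x t‖ ^ 2
      ≤ ∑ _t ∈ Finset.univ.filter fun t => x t ≠ 0, 1 := by
        apply Finset.sum_le_sum
        intro t _
        rcases hsign t with h | h | h <;> simp [h]
    _ = (Finset.univ.filter fun t => x t ≠ 0).card := by simp
    _ ≤ (k : ℝ) := by exact_mod_cast hcard

lemma norm_sq_diff_bound {k N : ℕ} (G G' : Fin N → EuclideanSpace ℝ (Fin d))
    (hG_sign : ∀ j, ∀ t, G j t = -1 ∨ G j t = 0 ∨ G j t = 1)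
    (hG_card : ∀ j, (Finset.univ.filter fun t => G j t ≠ 0).card ≤ k)
    (hG'_sign : ∀ j, ∀ t, G' j t = -1 ∨ G' j t = 0 ∨ G' j t = 1)
    (hG'_card : ∀ j, (Finset.univ.filter fun t => G' j t ≠ 0).card ≤ k)
    (hneighbor : ∃ i : Fin N, ∀ j, j ≠ i → G j = G' j) :
    ‖(∑ j, G j) - ∑ j, G' j‖ ^ 2 ≤ 4 * k := by
  obtain ⟨i, hi⟩ := hneighbor
  have hdiff : (∑ j, G j) - ∑ j, G' j = G i - G' i := by
    rw [← Finset.sum_sub_distrib]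
    rw [Finset.sum_eq_single i]
    · intro j _ hj
      rw [hi j hj, sub_self]
    · intro h
      exact absurd (Finset.mem_univ i) h
  rw [hdiff]
  have h1 : ‖G i - G' i‖ ≤ 2 * Real.sqrt k := by
    calc ‖G i - G' i‖ ≤ ‖G i‖ + ‖G' i‖ := norm_sub_le _ _
      _ ≤ Real.sqrt k + Real.sqrt k :=
          add_le_add (norm_le_sqrt_k (G i) (hG_sign i) (hG_card i))
            (norm_le_sqrt_k (G' i) (hG'_sign i) (hG'_card i))
      _ = 2 * Real.sqrt k := by ring
  have h2 : (0:ℝ) ≤ 2 * Real.sqrt k := by positivity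
  have h3 : Real.sqrt k ^ 2 = (k : ℝ) := Real.sq_sqrt (Nat.cast_nonneg k)
  nlinarith [norm_nonneg (G i - G' i)]

/-- **privacy guarantee of the DataLens TopAgg step.** For neighboring
`N`-tuples `G, G'` of top-`k` sign-compressed vectors in `ℝ^d`, the Gaussian-mechanism
output distributions `P = N(∑ⱼ G j, σ²I)` and `Q = N(∑ⱼ G' j, σ²I)` satisfy
`D_l(P ‖ Q) ≤ 2kl/σ²`, and hence for every `δ ∈ (0,1)` and measurable `S`,
`P(S) ≤ exp(2kl/σ² + log(1/δ)/(l-1)) · Q(S) + δ`. -/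
theorem datalens_topagg_privacy
    (d k N : ℕ) (hd : 0 < d) (hk : 0 < k) (hN : 0 < N)
    (σ : ℝ) (hσ : 0 < σ) (l : ℝ) (hl : 1 < l)
    (G G' : Fin N → EuclideanSpace ℝ (Fin d))
    (hG_sign : ∀ j, ∀ t, G j t = -1 ∨ G j t = 0 ∨ G j t = 1)
    (hG_card : ∀ j, (Finset.univ.filter fun t => G j t ≠ 0).card ≤ k)
    (hG'_sign : ∀ j, ∀ t, G' j t = -1 ∨ G' j t = 0 ∨ G' j t = 1)
    (hG'_card : ∀ j, (Finset.univ.filter fun t => G' j t ≠ 0).card ≤ k)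
    (hneighbor : ∃ i : Fin N, ∀ j, j ≠ i → G j = G' j) :
    renyiDiv l (gaussianEuclidean d (∑ j, G j) σ) (gaussianEuclidean d (∑ j, G' j) σ) ≤
        2 * k * l / σ ^ 2 ∧
      ∀ δ : ℝ, 0 < δ → δ < 1 →
        ∀ S : Set (EuclideanSpace ℝ (Fin d)), MeasurableSet S →
          (gaussianEuclidean d (∑ j, G j) σ S).toReal ≤
            Real.exp (2 * k * l / σ ^ 2 + Real.log (1 / δ) / (l - 1)) *
              (gaussianEuclidean d (∑ j, G' j) σ S).toReal + δ := by
  set μ := ∑ j, G j with hμ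
  set ν := ∑ j, G' j with hν
  have hnorm : ‖μ - ν‖ ^ 2 ≤ 4 * k :=
    norm_sq_diff_bound G G' hG_sign hG_card hG'_sign hG'_card hneighbor
  have hσ2 : (0:ℝ) < σ ^ 2 := by positivity
  have hl0 : (0:ℝ) < l := by linarith
  have hbound : l * ‖μ - ν‖ ^ 2 / (2 * σ ^ 2) ≤ 2 * k * l / σ ^ 2 := by
    rw [div_le_div_iff₀ (by positivity) (by positivity)]
    nlinarith [mul_le_mul_of_nonneg_left hnorm (mul_pos hl0 hσ2).le]
  have heμ : gaussianEuclidean d μ σ = gaussianEuclidean' d μ σ := rfl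
  have heν : gaussianEuclidean d ν σ = gaussianEuclidean' d ν σ := rfl
  constructor
  · rw [heμ, heν, renyi_eq hσ hl μ ν]
    exact hbound
  · intro δ hδ0 hδ1 S hS
    haveI := isProb_gauss hσ ν
    have hmom : ∫⁻ x, ENNReal.ofReal ((gφ d σ μ x / gφ d σ ν x) ^ l)
        ∂(gaussianEuclidean' d ν σ) ≤
        ENNReal.ofReal (Real.exp ((l - 1) * (2 * k * l / σ ^ 2))) := by
      rw [lint_ratio_pow hσ l μ ν]
      apply ENNReal.ofReal_le_ofReal
      apply Real.exp_le_exp.mpr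
      have e : (l - 1) * (2 * k * l / σ ^ 2) = l * (l - 1) * (4 * k) / (2 * σ ^ 2) := by
        field_simp
        ring
      rw [e]
      gcongr
    have hd := dp_conv (gaussianEuclidean' d ν σ) (fun x => gφ d σ μ x / gφ d σ ν x)
      ((gφ_meas σ μ).div (gφ_meas σ ν))
      (fun x => div_nonneg (gφ_pos hσ μ x).le (gφ_pos hσ ν x).le) hl hmom hδ0 S hS
    rw [← withDensity_ratio hσ μ ν] at hd
    rw [heμ, heν]
    exact hd
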